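/- An integral domain D is a ∗-Prüfer domain if and only if (((a) :_D (b)) + ((b) :_D (a)))^∗ = D for all nonzero a, b ∈ D. -/

import Mathlib

open FractionalIdeal

/-- A star operation on an integral domain `D` with fraction field `K`, acting on
fractional ideals: it fixes `D`, is extensive, monotone, idempotent (all on nonzero
ideals), and commutes with multiplication by nonzero principal fractional ideals. -/
structure StarOp (D : Type*) [CommRing D] [IsDomain D] (K : Type*) [Field K]
    [Algebra D K] [IsFractionRing D K] where
  star : FractionalIdeal (nonZeroDivisors D) K → FractionalIdeal (nonZeroDivisors D) K
  star_one : star 1 = 1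
  le_star : ∀ {A}, A ≠ 0 → A ≤ star A
  star_mono : ∀ {A B}, A ≠ 0 → A ≤ B → star A ≤ star B
  star_idem : ∀ {A}, A ≠ 0 → star (star A) = star A
  star_smul : ∀ {A : FractionalIdeal (nonZeroDivisors D) K} (x : K), x ≠ 0 → A ≠ 0 →
    star (spanSingleton (nonZeroDivisors D) x * A) = spanSingleton (nonZeroDivisors D) x * star A

variable {D K : Type*} [CommRing D] [IsDomain D] [Field K] [Algebra D K] [IsFractionRing D K]

/-! `(a) :_D (b) + (b) :_D (a)` is `F F⁻¹` for `F = (a, b)`, so the condition says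
that every nonzero two-generated ideal is `∗`-invertible. In an idempotent semiring
`(A + B)(A + C)(B + C) = (A + B + C)(AB + AC + BC)`, so if `A + B`, `A + C` and `B + C` are
`∗`-invertible then so is `A + B + C`; by induction on the number of generators every nonzero
finitely generated fractional ideal is `∗`-invertible. -/

theorem add_mul_add_mul_add {α : Type*} [IdemCommSemiring α] (a b c : α) :
    (a + b) * (a + c) * (b + c) = (a + b + c) * (a * b + a * c + b * c) := by
  ring_nf
  simp only [ofNat_eq_one, mul_one]

namespace FractionalIdeal

section

variable {R P : Type*} [CommRing R] {S : Submonoid R} [CommRing P] [Algebra R P]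

protected lemma mul_ne_zero [NoZeroDivisors P] {I J : FractionalIdeal S P} (hI : I ≠ 0)
    (hJ : J ≠ 0) : I * J ≠ 0 := by
  obtain ⟨a, haI, ha⟩ : ∃ a ∈ I, a ≠ 0 := by simpa [eq_zero_iff] using hI
  obtain ⟨b, hbJ, hb⟩ : ∃ b ∈ J, b ≠ 0 := by simpa [eq_zero_iff] using hJ
  exact fun h ↦ mul_ne_zero ha hb (eq_zero_iff.mp h _ (mul_mem_mul haI hbJ))

protected lemma add_mul_add_mul_add (I J L : FractionalIdeal S P) :
    (I + J) * (I + L) * (J + L) = (I + J + L) * (I * J + I * L + J * L) := by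
  apply coeToSubmodule_injective
  simpa only [coe_mul, coe_add] using _root_.add_mul_add_mul_add (I : Submodule R P) J L

variable [IsLocalization S P]

lemma coe_sum_spanSingleton (T : Finset P) :
    ((∑ z ∈ T, spanSingleton S z : FractionalIdeal S P) : Submodule R P) =
      Submodule.span R (T : Set P) := by
  classical
  induction T using Finset.induction with
  | empty => simp
  | insert z T hz ih =>
    rw [Finset.sum_insert hz, coe_add, ih, coe_spanSingleton, Finset.coe_insert,
      Submodule.span_insert, Submodule.add_eq_sup]

lemma exists_finset_eq_sum_spanSingleton {F : FractionalIdeal S P}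
    (hF : (F : Submodule R P).FG) :
    ∃ T : Finset P, 0 ∉ T ∧ ∑ z ∈ T, spanSingleton S z = F := by
  classical
  obtain ⟨T, hT⟩ := hF
  refine ⟨T.erase 0, T.notMem_erase 0, coeToSubmodule_injective ?_⟩
  dsimp only
  rw [coe_sum_spanSingleton, Finset.coe_erase, Submodule.span_sdiff_singleton_zero, hT]

end

lemma mul_inv_le_one (A : FractionalIdeal (nonZeroDivisors D) K) : A * A⁻¹ ≤ 1 :=
  mul_one_div_le_one

lemma mul_inv_ne_zero {A : FractionalIdeal (nonZeroDivisors D) K} (hA : A ≠ 0) :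
    A * A⁻¹ ≠ 0 :=
  (bot_lt_mul_inv hA).ne'

lemma le_inv_iff_mul_le {A B : FractionalIdeal (nonZeroDivisors D) K} (hA : A ≠ 0) :
    B ≤ A⁻¹ ↔ B * A ≤ 1 :=
  le_div_iff_mul_le hA

lemma inv_spanSingleton_mul {x : K} (hx : x ≠ 0) (A : FractionalIdeal (nonZeroDivisors D) K) :
    (spanSingleton _ x * A)⁻¹ = spanSingleton _ x⁻¹ * A⁻¹ := by
  rcases eq_or_ne A 0 with rfl | hA
  · simp [inv_zero']
  have hxA : spanSingleton _ x * A ≠ 0 :=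
    FractionalIdeal.mul_ne_zero (spanSingleton_ne_zero_iff.mpr hx) hA
  have cancel : spanSingleton (nonZeroDivisors D) x⁻¹ * spanSingleton _ x = 1 := by
    rw [spanSingleton_mul_spanSingleton, inv_mul_cancel₀ hx, spanSingleton_one]
  apply le_antisymm
  · calc (spanSingleton _ x * A)⁻¹
          = spanSingleton _ x⁻¹ * (spanSingleton _ x * (spanSingleton _ x * A)⁻¹) := by
            rw [← mul_assoc, cancel, one_mul]
      _ ≤ spanSingleton _ x⁻¹ * A⁻¹ := by
        gcongr
        rw [le_inv_iff_mul_le hA, mul_right_comm]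
        exact mul_inv_le_one _
  · rw [le_inv_iff_mul_le hxA]
    calc spanSingleton _ x⁻¹ * A⁻¹ * (spanSingleton _ x * A)
          = spanSingleton _ x⁻¹ * spanSingleton _ x * (A * A⁻¹) := by ring
      _ ≤ 1 := by
        rw [cancel, one_mul]
        exact mul_inv_le_one A

lemma spanSingleton_mul_mul_inv {x : K} (hx : x ≠ 0) (A : FractionalIdeal (nonZeroDivisors D) K) :
    spanSingleton _ x * A * (spanSingleton _ x * A)⁻¹ = A * A⁻¹ := by
  rw [inv_spanSingleton_mul hx, mul_mul_mul_comm, spanSingleton_mul_spanSingleton,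
    mul_inv_cancel₀ hx, spanSingleton_one, one_mul]

lemma mem_inv_spanSingleton_add_iff {x : K} (hx : x ≠ 0) (y z : K) :
    z ∈ (spanSingleton (nonZeroDivisors D) x + spanSingleton _ y)⁻¹ ↔
      z * x ∈ (1 : FractionalIdeal (nonZeroDivisors D) K) ∧
        z * y ∈ (1 : FractionalIdeal (nonZeroDivisors D) K) := by
  have hF : spanSingleton (nonZeroDivisors D) x + spanSingleton _ y ≠ 0 :=
    ne_bot_of_le_ne_bot (spanSingleton_ne_zero_iff.mpr hx) le_self_add
  rw [← spanSingleton_le_iff_mem, le_inv_iff_mul_le hF, mul_add,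
    spanSingleton_mul_spanSingleton, spanSingleton_mul_spanSingleton, ← sup_eq_add, sup_le_iff,
    spanSingleton_le_iff_mem, spanSingleton_le_iff_mem]

lemma coeIdeal_colon_span_singleton {a : D} (ha : a ≠ 0) (b : D) :
    (((Ideal.span {a} : Ideal D).colon (Ideal.span {b}) : Ideal D) :
        FractionalIdeal (nonZeroDivisors D) K) =
      spanSingleton _ (algebraMap D K a) *
        (spanSingleton _ (algebraMap D K a) + spanSingleton _ (algebraMap D K b))⁻¹ := by
  have ha' : algebraMap D K a ≠ 0 :=
    IsFractionRing.to_map_ne_zero_of_mem_nonZeroDivisors (mem_nonZeroDivisors_of_ne_zero ha)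
  rw [eq_spanSingleton_mul]
  constructor
  · intro z hz
    obtain ⟨u, hu, rfl⟩ := (mem_coeIdeal _).mp hz
    obtain ⟨e, he⟩ := Ideal.mem_span_singleton'.mp (Ideal.mem_colon_span_singleton.mp hu)
    refine ⟨algebraMap D K u / algebraMap D K a,
      (mem_inv_spanSingleton_add_iff ha' _ _).mpr ⟨?_, (mem_one_iff _).mpr ⟨e, ?_⟩⟩,
      mul_div_cancel₀ _ ha'⟩
    · rw [div_mul_cancel₀ _ ha']
      exact coe_mem_one _ u
    · rw [div_mul_eq_mul_div, eq_div_iff ha', ← map_mul, ← map_mul, he]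
  · intro y hy
    obtain ⟨hya, hyb⟩ := (mem_inv_spanSingleton_add_iff ha' _ _).mp hy
    obtain ⟨r, hr⟩ := (mem_one_iff _).mp hya
    obtain ⟨e, he⟩ := (mem_one_iff _).mp hyb
    refine (mem_coeIdeal _).mpr ⟨r, ?_, by rw [hr, mul_comm]⟩
    refine Ideal.mem_colon_span_singleton.mpr (Ideal.mem_span_singleton'.mpr ⟨e, ?_⟩)
    apply IsFractionRing.injective D K
    rw [map_mul, map_mul, hr, he]
    ring

lemma coeIdeal_colon_add_colon {a b : D} (ha : a ≠ 0) (hb : b ≠ 0) :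
    ((((Ideal.span {a} : Ideal D).colon (Ideal.span {b}) +
        (Ideal.span {b} : Ideal D).colon (Ideal.span {a}) : Ideal D)) :
        FractionalIdeal (nonZeroDivisors D) K) =
      (spanSingleton _ (algebraMap D K a) + spanSingleton _ (algebraMap D K b)) *
        (spanSingleton _ (algebraMap D K a) + spanSingleton _ (algebraMap D K b))⁻¹ := by
  rw [Submodule.add_eq_sup, coeIdeal_sup, coeIdeal_colon_span_singleton ha,
    coeIdeal_colon_span_singleton hb, add_comm (spanSingleton _ (algebraMap D K b)), ← add_mul]

end FractionalIdeal

namespace StarOp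

variable (s : StarOp D K)

def IsInvertible (A : FractionalIdeal (nonZeroDivisors D) K) : Prop :=
  s.star (A * A⁻¹) = 1

lemma star_ne_zero {A : FractionalIdeal (nonZeroDivisors D) K} (hA : A ≠ 0) : s.star A ≠ 0 :=
  ne_bot_of_le_ne_bot hA (s.le_star hA)

lemma star_le_one {A : FractionalIdeal (nonZeroDivisors D) K} (hA : A ≠ 0) (hA1 : A ≤ 1) :
    s.star A ≤ 1 :=
  s.star_one ▸ s.star_mono hA hA1

lemma star_star_mul {A B : FractionalIdeal (nonZeroDivisors D) K} (hA : A ≠ 0) (hB : B ≠ 0) :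
    s.star (s.star A * B) = s.star (A * B) := by
  have hAB : A * B ≠ 0 := FractionalIdeal.mul_ne_zero hA hB
  refine le_antisymm ?_ (s.star_mono hAB (mul_le_mul_left (s.le_star hA) B))
  suffices s.star A * B ≤ s.star (A * B) by
    simpa only [s.star_idem hAB] using
      s.star_mono (FractionalIdeal.mul_ne_zero (s.star_ne_zero hA) hB) this
  rw [FractionalIdeal.mul_le]
  intro x hx y hy
  rcases eq_or_ne y 0 with rfl | hy0
  · rw [mul_zero]
    exact zero_mem _
  have hyA : spanSingleton _ y * A ≤ A * B := by
    rw [mul_comm A]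
    gcongr
    exact spanSingleton_le_iff_mem.mpr hy
  have hxy : x * y ∈ s.star (spanSingleton _ y * A) := by
    rw [s.star_smul y hy0 hA, mul_comm x]
    exact mul_mem_mul (mem_spanSingleton_self _ y) hx
  exact s.star_mono (FractionalIdeal.mul_ne_zero (spanSingleton_ne_zero_iff.mpr hy0) hA) hyA hxy

variable {s}

lemma isInvertible_of_mul_le_one {A B : FractionalIdeal (nonZeroDivisors D) K} (hAB : A * B ≠ 0)
    (hAB1 : A * B ≤ 1) (h : s.star (A * B) = 1) : s.IsInvertible A := by
  have hA : A ≠ 0 := by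
    rintro rfl
    simp at hAB
  have hle : A * B ≤ A * A⁻¹ := by
    gcongr
    rwa [le_inv_iff_mul_le hA, mul_comm]
  refine le_antisymm (s.star_le_one (mul_inv_ne_zero hA) (mul_inv_le_one A)) ?_
  exact h ▸ s.star_mono hAB hle

lemma isInvertible_spanSingleton {x : K} (hx : x ≠ 0) : s.IsInvertible (spanSingleton _ x) := by
  rw [IsInvertible, spanSingleton_mul_inv K hx, s.star_one]

lemma IsInvertible.mul {A B : FractionalIdeal (nonZeroDivisors D) K} (hA : A ≠ 0) (hB : B ≠ 0)
    (hAi : s.IsInvertible A) (hBi : s.IsInvertible B) : s.IsInvertible (A * B) := by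
  have hAB : A * B * (A⁻¹ * B⁻¹) = A * A⁻¹ * (B * B⁻¹) := by ring
  refine isInvertible_of_mul_le_one (B := A⁻¹ * B⁻¹) ?_ ?_ ?_ <;> rw [hAB]
  · exact FractionalIdeal.mul_ne_zero (mul_inv_ne_zero hA) (mul_inv_ne_zero hB)
  · exact mul_le_one' (mul_inv_le_one A) (mul_inv_le_one B)
  · rw [← s.star_star_mul (mul_inv_ne_zero hA) (mul_inv_ne_zero hB), hAi, one_mul, hBi]

lemma IsInvertible.of_mul {A B : FractionalIdeal (nonZeroDivisors D) K} (hAB : A * B ≠ 0)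
    (h : s.IsInvertible (A * B)) : s.IsInvertible A := by
  have hassoc : A * (B * (A * B)⁻¹) = A * B * (A * B)⁻¹ := (mul_assoc _ _ _).symm
  exact isInvertible_of_mul_le_one (hassoc ▸ mul_inv_ne_zero hAB) (hassoc ▸ mul_inv_le_one _)
    (hassoc ▸ h)

lemma isInvertible_add_add {A B C : FractionalIdeal (nonZeroDivisors D) K} (hA : A ≠ 0)
    (hB : B ≠ 0) (hAB : s.IsInvertible (A + B)) (hAC : s.IsInvertible (A + C))
    (hBC : s.IsInvertible (B + C)) : s.IsInvertible (A + B + C) := by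
  have hAB0 : A + B ≠ 0 := ne_bot_of_le_ne_bot hA le_self_add
  have hAC0 : A + C ≠ 0 := ne_bot_of_le_ne_bot hA le_self_add
  have hBC0 : B + C ≠ 0 := ne_bot_of_le_ne_bot hB le_self_add
  have hprod := (hAB.mul hAB0 hAC0 hAC).mul (FractionalIdeal.mul_ne_zero hAB0 hAC0) hBC0 hBC
  rw [FractionalIdeal.add_mul_add_mul_add] at hprod
  refine hprod.of_mul (FractionalIdeal.mul_ne_zero (ne_bot_of_le_ne_bot hAB0 le_self_add) ?_)
  exact ne_bot_of_le_ne_bot (FractionalIdeal.mul_ne_zero hA hB) (le_self_add.trans le_self_add)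

lemma isInvertible_spanSingleton_add
    (H : ∀ a b : D, a ≠ 0 → b ≠ 0 → s.IsInvertible
      (spanSingleton _ (algebraMap D K a) + spanSingleton _ (algebraMap D K b)))
    (x y : K) (hx : x ≠ 0) (hy : y ≠ 0) :
    s.IsInvertible (spanSingleton _ x + spanSingleton _ y) := by
  obtain ⟨a, b, hb, hab⟩ := IsFractionRing.div_surjective (A := D) (y / x)
  have hy' : y = algebraMap D K a / algebraMap D K b * x := by rw [hab, div_mul_cancel₀ _ hx]
  have hb' : algebraMap D K b ≠ 0 := IsFractionRing.to_map_ne_zero_of_mem_nonZeroDivisors hb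
  have ha : a ≠ 0 := by
    rintro rfl
    simp [hy'] at hy
  have hc : algebraMap D K b / x ≠ 0 := div_ne_zero hb' hx
  have hscale :
      spanSingleton _ (algebraMap D K b / x) * (spanSingleton _ x + spanSingleton _ y) =
        spanSingleton (nonZeroDivisors D) (algebraMap D K b) +
          spanSingleton _ (algebraMap D K a) := by
    rw [mul_add, spanSingleton_mul_spanSingleton, spanSingleton_mul_spanSingleton, hy']
    congr 2 <;> field_simp
  rw [IsInvertible, ← spanSingleton_mul_mul_inv hc, hscale]
  exact H b a (nonZeroDivisors.ne_zero hb) ha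

lemma isInvertible_spanSingleton_add_sum (H : ∀ x y : K, x ≠ 0 → y ≠ 0 →
      s.IsInvertible (spanSingleton _ x + spanSingleton _ y))
    {T : Finset K} (hT : 0 ∉ T) {x : K} (hx : x ≠ 0) :
    s.IsInvertible (spanSingleton _ x + ∑ z ∈ T, spanSingleton _ z) := by
  classical
  induction T using Finset.induction generalizing x with
  | empty => simpa using isInvertible_spanSingleton hx
  | insert y T hyT ih =>
    have hy : y ≠ 0 := ne_of_mem_of_not_mem (Finset.mem_insert_self y T) hT
    have hT' : 0 ∉ T := fun h ↦ hT (Finset.mem_insert_of_mem h)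
    rw [Finset.sum_insert hyT, ← add_assoc]
    exact isInvertible_add_add (spanSingleton_ne_zero_iff.mpr hx)
      (spanSingleton_ne_zero_iff.mpr hy) (H x y hx hy) (ih hT' hx) (ih hT' hy)

lemma isInvertible_of_fg (H : ∀ x y : K, x ≠ 0 → y ≠ 0 →
      s.IsInvertible (spanSingleton _ x + spanSingleton _ y))
    {F : FractionalIdeal (nonZeroDivisors D) K} (hF : F ≠ 0) (hFG : (F : Submodule D K).FG) :
    s.IsInvertible F := by
  classical
  obtain ⟨T, hT0, rfl⟩ := exists_finset_eq_sum_spanSingleton hFG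
  obtain ⟨x, hxT⟩ : T.Nonempty := Finset.nonempty_iff_ne_empty.mpr (by rintro rfl; simp at hF)
  rw [← Finset.add_sum_erase T _ hxT]
  exact isInvertible_spanSingleton_add_sum H (fun h ↦ hT0 (Finset.mem_of_mem_erase h))
    (ne_of_mem_of_not_mem hxT hT0)

end StarOp

/-- `D` is a `∗`-Prüfer domain iff `(((a) :_D (b)) + ((b) :_D (a)))^∗ = D` for
all nonzero `a`, `b` in `D`. -/
theorem starPrufer_iff_colon_sum (s : StarOp D K) :
    (∀ F : FractionalIdeal (nonZeroDivisors D) K, F ≠ 0 → (F : Submodule D K).FG → s.star (F * F⁻¹) = 1) ↔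
    (∀ a b : D, a ≠ 0 → b ≠ 0 →
      s.star (↑((Ideal.span {a} : Ideal D).colon (Ideal.span {b}) +
        (Ideal.span {b} : Ideal D).colon (Ideal.span {a}))) = 1) := by
  constructor
  · intro H a b ha hb
    rw [coeIdeal_colon_add_colon ha hb]
    refine H _ (ne_bot_of_le_ne_bot ?_ le_self_add) ?_
    · exact spanSingleton_ne_zero_iff.mpr
        (IsFractionRing.to_map_ne_zero_of_mem_nonZeroDivisors (mem_nonZeroDivisors_of_ne_zero ha))
    · rw [coe_add, coe_spanSingleton, coe_spanSingleton]
      exact (Submodule.fg_span_singleton _).sup (Submodule.fg_span_singleton _)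
  · intro H F hF hFG
    refine StarOp.isInvertible_of_fg
      (StarOp.isInvertible_spanSingleton_add fun a b ha hb ↦ ?_) hF hFG
    rw [StarOp.IsInvertible, ← coeIdeal_colon_add_colon ha hb]
    exact H a b ha hb
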